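/- Let T₁, T₂ be trees and T = T₁ * v * T₂ their vertex bonding at a vertex v. Then v ∈ core(T) if and only if v ∈ core(T₁) and v ∈ core(T₂). -/

import Mathlib

open Finset SimpleGraph
open scoped Classical

variable {V : Type*}

/-- A stable (independent) set of vertices. -/
def stableSet (G : SimpleGraph V) (S : Finset V) : Prop :=
  ∀ u ∈ S, ∀ w ∈ S, ¬ G.Adj u w

/-- A maximum stable set. -/
def maxStableSet [Fintype V] (G : SimpleGraph V) (S : Finset V) : Prop :=
  stableSet G S ∧ ∀ S' : Finset V, stableSet G S' → S'.card ≤ S.card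

/-- The independence number α(G). -/
noncomputable def alphaNum [Fintype V] (G : SimpleGraph V) : ℕ :=
  ((Finset.univ : Finset V).powerset.filter (fun S => stableSet G S)).sup Finset.card

/-- core(G): the intersection of all maximum stable sets of G. -/
noncomputable def coreSet [Fintype V] (G : SimpleGraph V) : Finset V :=
  Finset.univ.filter (fun v => ∀ S : Finset V, maxStableSet G S → v ∈ S)

/-- A pendant vertex: a vertex with exactly one neighbor. -/
def pendant (G : SimpleGraph V) (v : V) : Prop :=
  ∃! w, G.Adj v w

/-- {A, B} is a bipartition of G into color classes. -/
def isBipartition [Fintype V] (G : SimpleGraph V) (A B : Finset V) : Prop :=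
  Disjoint A B ∧ A ∪ B = Finset.univ ∧
    ∀ u v, G.Adj u v → (u ∈ A ∧ v ∈ B) ∨ (u ∈ B ∧ v ∈ A)

/-- Stable sets of the subtree induced on a vertex set `A`. -/
def stableIn (G : SimpleGraph V) (A S : Finset V) : Prop :=
  S ⊆ A ∧ stableSet G S

/-- Maximum stable sets of the subtree induced on `A`. -/
def maxStableIn [Fintype V] (G : SimpleGraph V) (A S : Finset V) : Prop :=
  stableIn G A S ∧ ∀ S' : Finset V, stableIn G A S' → S'.card ≤ S.card

/-- The independence number of the subtree induced on `A`. -/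
noncomputable def alphaIn [Fintype V] (G : SimpleGraph V) (A : Finset V) : ℕ :=
  (A.powerset.filter (fun S => stableSet G S)).sup Finset.card

/-- The core of the subtree induced on `A`. -/
noncomputable def coreIn [Fintype V] (G : SimpleGraph V) (A : Finset V) : Finset V :=
  A.filter (fun x => ∀ S : Finset V, maxStableIn G A S → x ∈ S)

/-- `T` is the vertex bonding `T₁ * v * T₂` of the trees `T₁` and `T₂`, induced
on the vertex sets `A` and `B` respectively, identified at the vertex `v`. -/
def isBonding [Fintype V] (T : SimpleGraph V) (v : V) (A B : Finset V) : Prop :=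
  T.IsTree ∧ (T.induce (A : Set V)).IsTree ∧ (T.induce (B : Set V)).IsTree ∧
  A ∩ B = {v} ∧ A ∪ B = Finset.univ ∧
  ∀ x y : V, T.Adj x y → (x ∈ A ∧ y ∈ A) ∨ (x ∈ B ∧ y ∈ B)

/-!
Every edge of `T` lies inside one of the halves `A`, `B`, which share only `v`. Hence stable
sets of the halves that agree on `v` glue to a stable set of `T`, and any `S` satisfies
`|S ∩ A| + |S ∩ B| = |S| + [v ∈ S]`. If `v` is in every maximum stable set of `T`, a maximum
stable set of `T₁` avoiding `v` glued to `(M ∩ B) \ {v}`, for `M` maximum in `T`, would be a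
maximum stable set of `T` avoiding `v`. Conversely, if `v` is in both cores, a maximum stable set
of `T` avoiding `v` meets each half in fewer than `α(Tᵢ)` vertices, while glued maximum stable
sets of the halves give `α(T₁) + α(T₂) - 1` independent vertices.
-/

structure IsVertexSeparation [Fintype V] (T : SimpleGraph V) (v : V) (A B : Finset V) :
    Prop where
  inter_eq : A ∩ B = {v}
  union_eq : A ∪ B = univ
  adj : ∀ x y : V, T.Adj x y → (x ∈ A ∧ y ∈ A) ∨ (x ∈ B ∧ y ∈ B)

lemma isBonding.isVertexSeparation [Fintype V] {T : SimpleGraph V} {v : V} {A B : Finset V}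
    (h : isBonding T v A B) : IsVertexSeparation T v A B :=
  ⟨h.2.2.2.1, h.2.2.2.2.1, h.2.2.2.2.2⟩

lemma stableSet.mono {G : SimpleGraph V} {S S' : Finset V} (hS : stableSet G S) (h : S' ⊆ S) :
    stableSet G S' :=
  fun u hu w hw => hS u (h hu) w (h hw)

section Core

variable [Fintype V] {G : SimpleGraph V}

lemma maxStableSet_iff_maxStableIn_univ {S : Finset V} :
    maxStableSet G S ↔ maxStableIn G univ S := by
  simp [maxStableSet, maxStableIn, stableIn]

lemma exists_maxStableIn (G : SimpleGraph V) (A : Finset V) : ∃ S, maxStableIn G A S := by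
  have hempty : ∅ ∈ A.powerset.filter (stableIn G A) := by
    simp [stableIn, stableSet]
  obtain ⟨S, hS, hmax⟩ := exists_max_image _ card ⟨∅, hempty⟩
  exact ⟨S, (mem_filter.1 hS).2,
    fun S' hS' => hmax S' (mem_filter.2 ⟨mem_powerset.2 hS'.1, hS'⟩)⟩

lemma exists_maxStableSet (G : SimpleGraph V) : ∃ S, maxStableSet G S := by
  simpa only [maxStableSet_iff_maxStableIn_univ] using exists_maxStableIn G univ

lemma mem_coreSet_iff {v : V} : v ∈ coreSet G ↔ ∀ S, maxStableSet G S → v ∈ S := by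
  simp [coreSet]

lemma mem_coreIn_iff {A : Finset V} {v : V} :
    v ∈ coreIn G A ↔ v ∈ A ∧ ∀ S, maxStableIn G A S → v ∈ S := by
  simp [coreIn]

lemma card_lt_of_mem_coreIn {A S M : Finset V} {v : V} (hv : v ∈ coreIn G A)
    (hM : maxStableIn G A M) (hS : stableIn G A S) (hvS : v ∉ S) : S.card < M.card := by
  refine (hM.2 S hS).lt_of_ne fun hcard => hvS ?_
  exact (mem_coreIn_iff.1 hv).2 S ⟨hS, fun S' hS' => hcard ▸ hM.2 S' hS'⟩

end Core

namespace IsVertexSeparation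

variable [Fintype V] {T : SimpleGraph V} {v : V} {A B : Finset V}

lemma symm (h : IsVertexSeparation T v A B) : IsVertexSeparation T v B A :=
  ⟨by rw [inter_comm, h.inter_eq], by rw [union_comm, h.union_eq],
    fun x y hxy => (h.adj x y hxy).symm⟩

lemma eq_of_mem (h : IsVertexSeparation T v A B) {x : V} (hA : x ∈ A) (hB : x ∈ B) : x = v :=
  mem_singleton.1 (h.inter_eq ▸ mem_inter.2 ⟨hA, hB⟩)

lemma mem_left (h : IsVertexSeparation T v A B) : v ∈ A :=
  (mem_inter.1 (h.inter_eq ▸ mem_singleton_self v)).1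

lemma card_inter_add_card_inter (h : IsVertexSeparation T v A B) (S : Finset V) :
    (S ∩ A).card + (S ∩ B).card = S.card + (S ∩ {v}).card := by
  rw [← card_union_add_card_inter, ← inter_union_distrib_left, ← inter_inter_distrib_left,
    h.union_eq, h.inter_eq, inter_univ]

lemma stableSet_union (h : IsVertexSeparation T v A B) {SA SB : Finset V}
    (hSA : stableIn T A SA) (hSB : stableIn T B SB) (hv : v ∈ SA ↔ v ∈ SB) :
    stableSet T (SA ∪ SB) := by
  have hcross : ∀ u ∈ SA, ∀ w ∈ SB, ¬ T.Adj u w := by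
    intro u hu w hw hadj
    rcases h.adj u w hadj with ⟨-, hwA⟩ | ⟨huB, -⟩
    · obtain rfl := h.eq_of_mem hwA (hSB.1 hw)
      exact hSA.2 u hu w (hv.2 hw) hadj
    · obtain rfl := h.eq_of_mem (hSA.1 hu) huB
      exact hSB.2 u (hv.1 hu) w hw hadj
  intro u hu w hw
  rcases mem_union.1 hu with hu | hu <;> rcases mem_union.1 hw with hw | hw
  · exact hSA.2 u hu w hw
  · exact hcross u hu w hw
  · exact fun hadj => hcross w hw u hu hadj.symm
  · exact hSB.2 u hu w hw

lemma mem_coreIn_of_mem_coreSet (h : IsVertexSeparation T v A B) (hv : v ∈ coreSet T) :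
    v ∈ coreIn T A := by
  refine mem_coreIn_iff.2 ⟨h.mem_left, fun SA hSA => ?_⟩
  by_contra hvSA
  obtain ⟨M, hM⟩ := exists_maxStableSet T
  have hvM : v ∈ M := mem_coreSet_iff.1 hv M hM
  set MB := (M ∩ B).erase v
  have hMB : stableIn T B MB :=
    ⟨(erase_subset _ _).trans inter_subset_right,
      hM.1.mono ((erase_subset _ _).trans inter_subset_left)⟩
  have hvMB : v ∉ MB := notMem_erase _ _
  have hdisj : Disjoint SA MB := disjoint_left.2 fun x hxA hxB =>
    hvMB (h.eq_of_mem (hSA.1.1 hxA) (hMB.1 hxB) ▸ hxB)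
  have hcardM : (M ∩ A).card + (M ∩ B).card = M.card + 1 := by
    rw [h.card_inter_add_card_inter, inter_singleton_of_mem hvM, card_singleton]
  have hcardMB : MB.card + 1 = (M ∩ B).card :=
    card_erase_add_one (mem_inter.2 ⟨hvM, h.symm.mem_left⟩)
  have hcardMA : (M ∩ A).card ≤ SA.card :=
    hSA.2 _ ⟨inter_subset_right, hM.1.mono inter_subset_left⟩
  have hN : maxStableSet T (SA ∪ MB) := by
    refine ⟨h.stableSet_union hSA.1 hMB (iff_of_false hvSA hvMB), fun S' hS' => ?_⟩
    rw [card_union_of_disjoint hdisj]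
    have hMmax := hM.2 S' hS'
    omega
  exact (mem_union.1 (mem_coreSet_iff.1 hv _ hN)).elim hvSA hvMB

lemma mem_coreSet_of_mem_coreIn (h : IsVertexSeparation T v A B) (hvA : v ∈ coreIn T A)
    (hvB : v ∈ coreIn T B) : v ∈ coreSet T := by
  refine mem_coreSet_iff.2 fun S hS => ?_
  by_contra hvS
  obtain ⟨MA, hMA⟩ := exists_maxStableIn T A
  obtain ⟨MB, hMB⟩ := exists_maxStableIn T B
  have hltA : (S ∩ A).card < MA.card := card_lt_of_mem_coreIn hvA hMA
    ⟨inter_subset_right, hS.1.mono inter_subset_left⟩ fun h' => hvS (mem_inter.1 h').1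
  have hltB : (S ∩ B).card < MB.card := card_lt_of_mem_coreIn hvB hMB
    ⟨inter_subset_right, hS.1.mono inter_subset_left⟩ fun h' => hvS (mem_inter.1 h').1
  have hcardS : (S ∩ A).card + (S ∩ B).card = S.card := by
    rw [h.card_inter_add_card_inter, inter_singleton_of_notMem hvS, card_empty, add_zero]
  have hglue : stableSet T (MA ∪ MB) := h.stableSet_union hMA.1 hMB.1
    (iff_of_true ((mem_coreIn_iff.1 hvA).2 MA hMA) ((mem_coreIn_iff.1 hvB).2 MB hMB))
  have hoverlap : (MA ∩ MB).card ≤ 1 := by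
    simpa [h.inter_eq] using card_le_card (inter_subset_inter hMA.1.1 hMB.1.1)
  have hcardGlue := card_union_add_card_inter MA MB
  have hSmax := hS.2 _ hglue
  omega

end IsVertexSeparation

theorem stmt15 [Fintype V] (T : SimpleGraph V) (v : V) (A B : Finset V)
    (hbond : isBonding T v A B) :
    v ∈ coreSet T ↔ v ∈ coreIn T A ∧ v ∈ coreIn T B := by
  have h := hbond.isVertexSeparation
  exact ⟨fun hv => ⟨h.mem_coreIn_of_mem_coreSet hv, h.symm.mem_coreIn_of_mem_coreSet hv⟩,
    fun ⟨hvA, hvB⟩ => h.mem_coreSet_of_mem_coreIn hvA hvB⟩
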